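/- The elements X^μ Ť_w (μ ∈ P, w ∈ W) are linearly independent over 𝕃 in 𝒜 # W; likewise the elements Ť_w X^μ (μ ∈ P, w ∈ W) are linearly independent over 𝕃. -/

import Mathlib

open scoped BigOperators
open RealInnerProductSpace

noncomputable section

/-- The alternating word `x y x y ⋯` with `m` factors. -/
def braidWord {M : Type} [Monoid M] (x y : M) (m : ℕ) : M :=
  ((List.range m).map (fun i => if i % 2 = 0 then x else y)).prod

instance instCoeFunMultiplicativeAddAut {P : Type} [Add P] :
    CoeFun (Multiplicative (AddAut P)) (fun _ => P → P) :=
  ⟨fun e => (Multiplicative.toAdd e : AddAut P)⟩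

/-- The data of:  an irreducible reduced crystallographic root system `R₀` of full rank,
realized inside its weight lattice `P` which is embedded in a Euclidean space `V`;
the ring `𝕃` of coefficients together with the Weyl-invariant Hecke parameters `τ`;
the extended affine Weyl group `W = W₀ ⋉ t(c P̂)` of the corresponding irreducible reduced
affine root system `R` (affine roots are recorded as pairs `(α, r) ∈ P × ℤ` standing for
`α + m_α r c`), with its simple reflections `s₀, …, s_n`, length function, and the
subgroup `Ω` of length-zero elements; the localization `𝒜` of the group algebra `𝕃[P]`
at the Weyl denominator `δ`; and the smash product `𝒜 # W`. -/
structure DAHACtx where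
  n : ℕ
  hn : 0 < n
  c : ℝ
  hc : 0 < c
  /- the coefficient algebra 𝕃 -/
  L : Type
  [ringL : CommRing L]
  [algCL : Algebra ℂ L]
  [ntL : Nontrivial L]
  /- the ambient Euclidean space V -/
  V : Type
  [nacgV : NormedAddCommGroup V]
  [ipsV : InnerProductSpace ℝ V]
  [fdV : FiniteDimensional ℝ V]
  finrankV : Module.finrank ℝ V = n
  /- the weight lattice P, embedded in V -/
  P : Type
  [acgP : AddCommGroup P]
  [decP : DecidableEq P]
  ePV : P →+ V
  ePV_inj : Function.Injective ePV
  /- the finite root system R₀ (its elements lie in the root lattice Q ⊆ P) -/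
  R₀ : Finset P
  root_ne : ∀ α ∈ R₀, α ≠ (0 : P)
  root_neg : ∀ α ∈ R₀, -α ∈ R₀
  root_span : Submodule.span ℝ (ePV '' R₀) = ⊤
  root_reduced : ∀ α ∈ R₀, ∀ β ∈ R₀, ∀ t : ℝ, ePV β = t • ePV α → t = 1 ∨ t = -1
  /- the coroot pairing ⟨λ, α^∨⟩ (crystallographic integrality) -/
  cp : P → P →+ ℤ
  cp_self : ∀ α ∈ R₀, cp α α = 2
  cp_inner : ∀ α ∈ R₀, ∀ lam : P, ((cp α lam : ℝ)) * ⟪ePV α, ePV α⟫ = 2 * ⟪ePV lam, ePV α⟫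
  root_refl : ∀ α ∈ R₀, ∀ β ∈ R₀, β - cp α β • α ∈ R₀
  irreducible : ∀ S : Finset P, S ⊆ R₀ → S.Nonempty → (R₀ \ S).Nonempty →
      ∃ α ∈ S, ∃ β ∈ R₀ \ S, cp α β ≠ 0
  weight_lattice : ∀ v : V,
      (∀ α ∈ R₀, ∃ z : ℤ, (z : ℝ) * ⟪ePV α, ePV α⟫ = 2 * ⟪v, ePV α⟫) → v ∈ Set.range ePV
  /- the simple roots:  αP j, for j = 1, …, n, is the simple basis of R₀⁺, while
     αP 0 = α₀ is the gradient of the affine simple root a₀ = α₀ + c -/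
  αP : Fin (n+1) → P
  αP_mem : ∀ j, αP j ∈ R₀
  simple_indep : LinearIndependent ℝ (fun j : Fin n => ePV (αP j.succ))
  simple_pos : ∀ β ∈ R₀,
      (∃ g : Fin n → ℕ, β = ∑ j : Fin n, (g j : ℤ) • αP j.succ) ∨
      (∃ g : Fin n → ℕ, β = -(∑ j : Fin n, (g j : ℤ) • αP j.succ))
  /- the Hecke parameters τ_α  (recorded as a function of the gradient root) -/
  τR : P → Lˣ
  /- the extended affine Weyl group W, together with:
     the simple reflections s j (j = 0, …, n);  the gradient action w ↦ w' on P;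
     the reflections s_a attached to the affine roots a = (α, r);  the action of W on
     affine roots;  the gradient projection w = v t_{cλ} ↦ v and the translations t_{cμ} -/
  W : Type
  [grpW : Group W]
  s : Fin (n+1) → W
  grAct : W →* Multiplicative (AddAut P)
  saff : P × ℤ → W
  saff_simple : ∀ j : Fin (n+1), saff (αP j, if j = 0 then 1 else 0) = s j
  saff_sq : ∀ a : P × ℤ, saff a * saff a = 1
  grAct_saff : ∀ (a : P × ℤ) (lam : P), grAct (saff a) lam = lam - cp a.1 lam • a.1
  root_stable : ∀ (w : W), ∀ α ∈ R₀, grAct w α ∈ R₀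
  τ_inv : ∀ (w : W) (α : P), τR (grAct w α) = τR α
  wact : W → P × ℤ → P × ℤ
  wact_one : ∀ a, wact 1 a = a
  wact_mul : ∀ v w a, wact (v * w) a = wact v (wact w a)
  wact_fst : ∀ w a, (wact w a).1 = grAct w a.1
  saff_conj : ∀ w a, saff (wact w a) = w * saff a * w⁻¹
  prW : W →* W
  prW_saff : ∀ a : P × ℤ, prW (saff a) = saff (a.1, 0)
  grAct_prW : ∀ w, grAct (prW w) = grAct w
  Phat : Type
  [acgPhat : AddCommGroup Phat]
  tr : Phat → W
  tr_add : ∀ μ ν, tr (μ + ν) = tr μ * tr ν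
  tr_inj : Function.Injective tr
  grAct_tr : ∀ (μ : Phat) (lam : P), grAct (tr μ) lam = lam
  prW_tr : ∀ μ, prW (tr μ) = 1
  W_decomp : ∀ w : W, ∃! μ : Phat, w = prW w * tr μ
  /- the length function on W and the subgroup Ω of length-zero elements -/
  len : W → ℕ
  len_s : ∀ j, len (s j) = 1
  Ω : Subgroup W
  Ω_len : ∀ w : W, w ∈ Ω ↔ len w = 0
  Ω_comm : ∀ u v : Ω, u * v = v * u
  exists_reduced : ∀ w : W, ∃ (u : Ω) (l : List (Fin (n+1))),
      w = (u : W) * (l.map s).prod ∧ l.length = len w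
  len_min : ∀ (w : W) (u : Ω) (l : List (Fin (n+1))),
      w = (u : W) * (l.map s).prod → len w ≤ l.length
  σΩ : Ω →* Equiv.Perm (Fin (n+1))
  Ω_conj : ∀ (u : Ω) (j : Fin (n+1)), (u : W) * s j * (u : W)⁻¹ = s (σΩ u j)
  Ω_aff : ∀ (u : Ω) (j : Fin (n+1)),
      wact (u : W) (αP j, if j = 0 then 1 else 0) = (αP (σΩ u j), if σΩ u j = 0 then 1 else 0)
  /- the elements (X^λ - X^{s_j'λ})/(1 - X^{-α_j}) of 𝕃[P] -/
  DL : Fin (n+1) → P → AddMonoidAlgebra L P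
  DL_spec : ∀ (j : Fin (n+1)) (lam : P),
      (1 - AddMonoidAlgebra.of' L P (-(αP j))) * DL j lam
        = AddMonoidAlgebra.of' L P lam - AddMonoidAlgebra.of' L P (grAct (s j) lam)
  /- 𝒜 : the localization of 𝕃[P] at the Weyl denominator δ = ∏_{α ∈ R₀} (1 - X^α) -/
  A : Type
  [cringA : CommRing A]
  [algLA : Algebra L A]
  toA : AddMonoidAlgebra L P →ₐ[L] A
  uδ : Aˣ
  uδ_spec : (uδ : A) = toA (∏ α ∈ R₀, (1 - AddMonoidAlgebra.of' L P α))
  A_surj : ∀ x : A, ∃ (f : AddMonoidAlgebra L P) (k : ℕ), x = toA f * (((uδ⁻¹ : Aˣ) : A)) ^ k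
  A_ker : ∀ f : AddMonoidAlgebra L P, toA f = 0 →
      ∃ k : ℕ, (∏ α ∈ R₀, (1 - AddMonoidAlgebra.of' L P α)) ^ k * f = 0
  uXR : P → Aˣ
  uXR_spec : ∀ α ∈ R₀, (uXR α : A) = 1 - toA (AddMonoidAlgebra.of' L P (-α))
  /- the action of W on 𝒜 (through the gradient w ↦ w') -/
  actA : W →* (A ≃ₐ[L] A)
  actA_X : ∀ (w : W) (lam : P),
      actA w (toA (AddMonoidAlgebra.of' L P lam)) = toA (AddMonoidAlgebra.of' L P (grAct w lam))
  /- the smash product 𝒜 # W -/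
  SW : Type
  [ringSW : Ring SW]
  [algLSW : Algebra L SW]
  ιA : A →ₐ[L] SW
  ιW : W →* SWˣ
  cross : ∀ (w : W) (f : A), ((ιW w : SWˣ) : SW) * ιA f = ιA (actA w f) * ((ιW w : SWˣ) : SW)
  decomp : Function.Bijective
      (fun x : W →₀ A => x.sum fun w f => ιA f * ((ιW w : SWˣ) : SW))

attribute [instance] DAHACtx.ringL DAHACtx.algCL DAHACtx.ntL DAHACtx.nacgV DAHACtx.ipsV
  DAHACtx.fdV DAHACtx.acgP DAHACtx.decP DAHACtx.grpW DAHACtx.acgPhat DAHACtx.cringA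
  DAHACtx.algLA DAHACtx.ringSW DAHACtx.algLSW

namespace DAHACtx

variable (C : DAHACtx)

/-- The Hecke parameter `τ_j = τ_{a_j}`. -/
def τ (j : Fin (C.n + 1)) : C.Lˣ := C.τR (C.αP j)

/-- `m_{jk}`, the order of `s_j s_k` in `W` (with the value `0` standing for `m_{jk} = ∞`). -/
def m (j k : Fin (C.n + 1)) : ℕ := orderOf (C.s j * C.s k)

/-- The monomial `X^λ` in the group algebra `𝕃[P]`. -/
def Xl (lam : C.P) : AddMonoidAlgebra C.L C.P := AddMonoidAlgebra.of' C.L C.P lam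

/-- The monomial `X^λ`, viewed inside the smash product `𝒜 # W`. -/
def XS (lam : C.P) : C.SW := C.ιA (C.toA (C.Xl lam))

/-- The simple affine roots `a_0 = α₀ + c` and `a_j = α_j` (`1 ≤ j ≤ n`). -/
def asimple (j : Fin (C.n + 1)) : C.P × ℤ := (C.αP j, if j = 0 then 1 else 0)

/-- The Demazure–Lusztig element
`Ť(a) = τ_a s_a + (τ_a - τ_a⁻¹)(1 - X^{-a'})⁻¹ (1 - s_a)` of `𝒜 # W`. -/
def Tc (a : C.P × ℤ) : C.SW :=
  ((C.τR a.1 : C.L)) • ((C.ιW (C.saff a) : C.SWˣ) : C.SW)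
    + C.ιA ((((C.τR a.1 : C.L)) - (((C.τR a.1)⁻¹ : C.Lˣ) : C.L)) • (((C.uXR a.1)⁻¹ : C.Aˣ) : C.A))
        * (1 - ((C.ιW (C.saff a) : C.SWˣ) : C.SW))

/-- The Demazure–Lusztig element `Ť_j = Ť(a_j)`. -/
def Tch (j : Fin (C.n + 1)) : C.SW := C.Tc (C.asimple j)

/-- `w = u s_{j₁} ⋯ s_{j_ℓ}` is a reduced decomposition of `w` (`u ∈ Ω`, `ℓ = ℓ(w)`). -/
def IsReducedWord (w : C.W) (u : C.Ω) (l : List (Fin (C.n + 1))) : Prop :=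
  w = (u : C.W) * (l.map C.s).prod ∧ l.length = C.len w

/-- A choice of the `Ω`-part of a reduced decomposition of `w`. -/
def redΩ (w : C.W) : C.Ω := (C.exists_reduced w).choose

/-- A choice of reduced word for `w`. -/
def redList (w : C.W) : List (Fin (C.n + 1)) := (C.exists_reduced w).choose_spec.choose

theorem red_spec (w : C.W) : C.IsReducedWord w (C.redΩ w) (C.redList w) :=
  (C.exists_reduced w).choose_spec.choose_spec

/-- The element `Ť_w = u Ť_{j₁} ⋯ Ť_{j_ℓ}` of `𝒜 # W`, for a (choice of) reduced
decomposition `w = u s_{j₁} ⋯ s_{j_ℓ}`. -/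
def TwS (w : C.W) : C.SW :=
  ((C.ιW (C.redΩ w) : C.SWˣ) : C.SW) * ((C.redList w).map fun j => C.Tch j).prod

/-- The Bruhat partial order on `W`:  `v ≤ w` iff a reduced expression for `v` is obtained
from a reduced expression for `w` by deleting simple reflections. -/
def BruhatLE (v w : C.W) : Prop :=
  ∃ (u : C.Ω) (lw lv : List (Fin (C.n + 1))),
    C.IsReducedWord w u lw ∧ C.IsReducedWord v u lv ∧ lv.Sublist lw

end DAHACtx

/-!
Write `𝒜 # W = ⊕_{x ∈ W} 𝒜 x`. Each `Ť_j` equals `g_j + f_j s_j` with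
`f_j (1 - X^{-α_j}) = τ_j⁻¹ - τ_j X^{-α_j}`; the right-hand side is a non-zero-divisor of `𝕃[P]`
because `P` is torsion-free, and `𝕃[P] → 𝒜` is injective and preserves non-zero-divisors because
`δ` is one. Multiplying out a reduced word therefore gives
`Ť_w = f_w w + (terms x with ℓ(x) < ℓ(w))` with `f_w` a non-zero-divisor of `𝒜`. So `X^μ Ť_w` and
`Ť_w X^μ` have leading terms `X^μ f_w w` and `f_w X^{w'μ} w`. In a linear relation, the
`w`-component for a `w` of maximal length is a nontrivial relation among the `f_w X^ν`, which
cannot exist.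
-/

open nonZeroDivisors

theorem AddMonoidAlgebra.single_zero_sub_single_mem_nonZeroDivisors {R G : Type*} [CommRing R]
    [AddCommGroup G] [IsAddTorsionFree G] {a : R} (ha : IsUnit a) (b : R) {γ : G} (hγ : γ ≠ 0) :
    AddMonoidAlgebra.single 0 a - AddMonoidAlgebra.single γ b ∈ (AddMonoidAlgebra R G)⁰ := by
  refine mem_nonZeroDivisors_iff_left.mpr fun f hf => ?_
  -- Comparing coefficients, the support of `f` is stable under `λ ↦ λ - γ`, so it is empty.
  have step : ∀ lam, f.coeff lam ≠ 0 → f.coeff (-γ + lam) ≠ 0 := by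
    intro lam hlam h0
    have h := congrArg (fun g => AddMonoidAlgebra.coeff g lam) hf
    simp only [sub_mul, AddMonoidAlgebra.coeff_sub, Finsupp.sub_apply,
      AddMonoidAlgebra.coeff_single_mul_apply] at h
    simp [h0, ha.mul_right_eq_zero, hlam] at h
  by_contra hf0
  obtain ⟨lam, hlam⟩ : ∃ lam, f.coeff lam ≠ 0 := by
    by_contra! h
    exact hf0 (AddMonoidAlgebra.coeff_injective (Finsupp.ext h))
  have orbit : ∀ n : ℕ, f.coeff (lam + n • -γ) ≠ 0 := by
    intro n
    induction n with
    | zero => simpa using hlam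
    | succ n ih => convert step _ ih using 2; rw [succ_nsmul]; abel
  exact (infinite_range_add_nsmul_iff lam (-γ) |>.mpr (neg_ne_zero.mpr hγ)).mono
    (Set.range_subset_iff.mpr fun n => Finsupp.mem_support_iff.mpr (orbit n))
    f.coeff.support.finite_toSet

theorem linearIndependent_of_triangular {ι κ R M : Type*} [Ring R] [AddCommGroup M]
    [Module R M] (len : κ → ℕ) (H : ι × κ → κ →₀ M)
    (hsupp : ∀ p x, x ≠ p.2 → H p x ≠ 0 → len x < len p.2)
    (hlead : ∀ w, LinearIndependent R fun μ => H (μ, w) w) :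
    LinearIndependent R H := by
  classical
  refine linearIndependent_iff'.mpr fun s g hg => ?_
  by_contra! hne
  obtain ⟨p₀, hp₀s, hp₀⟩ := hne
  obtain ⟨w, hwT, hwmax⟩ := ((s.filter fun p => g p ≠ 0).image Prod.snd).exists_max_image len
    ⟨p₀.2, Finset.mem_image_of_mem _ (Finset.mem_filter.mpr ⟨hp₀s, hp₀⟩)⟩
  obtain ⟨p₁, hp₁, rfl⟩ := Finset.mem_image.mp hwT
  rw [Finset.mem_filter] at hp₁
  -- At a top-length `w`, only the terms with `p.2 = w` contribute to the `w`-coefficient.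
  have hw : ∑ p ∈ s.filter (·.2 = p₁.2), g p • H p p₁.2 = 0 := by
    rw [Finset.sum_filter_of_ne]
    · simpa using congrArg (· p₁.2) hg
    intro p hp hne
    by_contra hp2
    have hlt := hsupp p p₁.2 (Ne.symm hp2) (right_ne_zero_of_smul hne)
    have hle := hwmax p.2 (Finset.mem_image_of_mem _
      (Finset.mem_filter.mpr ⟨hp, left_ne_zero_of_smul hne⟩))
    omega
  have hsum :
      ∑ μ ∈ (s.filter (·.2 = p₁.2)).image Prod.fst, g (μ, p₁.2) • H (μ, p₁.2) p₁.2 = 0 := by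
    rw [Finset.sum_image fun p hp q hq h => Prod.ext h (by grind), ← hw]
    refine Finset.sum_congr rfl fun p hp => ?_
    rw [← (Finset.mem_filter.mp hp).2]
  exact hp₁.2 (linearIndependent_iff'.mp (hlead p₁.2) _ _ hsum p₁.1
    (Finset.mem_image_of_mem _ (Finset.mem_filter.mpr ⟨hp₁.1, rfl⟩)))

namespace DAHACtx

variable (C : DAHACtx)

instance : IsAddTorsionFree C.P :=
  have := IsAddTorsionFree.of_isTorsionFree ℝ C.V
  C.ePV_inj.isAddTorsionFree C.ePV

theorem weylDenominator_mem_nonZeroDivisors :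
    ∏ α ∈ C.R₀, (1 - AddMonoidAlgebra.of' C.L C.P α) ∈ (AddMonoidAlgebra C.L C.P)⁰ :=
  Submonoid.prod_mem _ fun α hα => by
    simpa [AddMonoidAlgebra.one_def] using
      AddMonoidAlgebra.single_zero_sub_single_mem_nonZeroDivisors isUnit_one 1 (C.root_ne α hα)

theorem toA_injective : Function.Injective C.toA :=
  (injective_iff_map_eq_zero C.toA).mpr fun f hf =>
    let ⟨k, hk⟩ := C.A_ker f hf
    mem_nonZeroDivisors_iff_left.mp (pow_mem C.weylDenominator_mem_nonZeroDivisors k) f hk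

theorem toA_mem_nonZeroDivisors {g : AddMonoidAlgebra C.L C.P}
    (hg : g ∈ (AddMonoidAlgebra C.L C.P)⁰) : C.toA g ∈ C.A⁰ := by
  refine mem_nonZeroDivisors_iff_left.mpr fun x hx => ?_
  obtain ⟨f, k, rfl⟩ := C.A_surj x
  have hgf : C.toA (g * f) = 0 := by
    calc C.toA (g * f)
        = C.toA g * (C.toA f * (((C.uδ⁻¹ : C.Aˣ) : C.A)) ^ k) * ((C.uδ : C.Aˣ) : C.A) ^ k := by
          rw [map_mul, mul_assoc, mul_assoc, ← mul_pow, Units.inv_mul, one_pow, mul_one]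
      _ = 0 := by rw [hx, zero_mul]
  rw [mem_nonZeroDivisors_iff_left.mp hg f (C.toA_injective (by rwa [map_zero])), map_zero,
    zero_mul]

theorem actA_mem_nonZeroDivisors (w : C.W) {a : C.A} (ha : a ∈ C.A⁰) : C.actA w a ∈ C.A⁰ :=
  MulEquivClass.map_nonZeroDivisors (C.actA w) ▸ Submonoid.mem_map_of_mem _ ha

theorem linearIndependent_mul_toA_Xl {h : C.A} (hh : h ∈ C.A⁰) {e : C.P → C.P}
    (he : Function.Injective e) :
    LinearIndependent C.L fun μ => h * C.toA (C.Xl (e μ)) :=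
  ((AddMonoidAlgebra.basis C.P C.L).linearIndependent.comp e he).map_injOn
    (LinearMap.mulLeft C.L h ∘ₗ C.toA.toLinearMap)
    (Function.Injective.injOn fun _ _ hab =>
      C.toA_injective ((mul_cancel_left_mem_nonZeroDivisors hh).mp hab))

def dlCoeffOne (j : Fin (C.n + 1)) : C.A :=
  ((C.τ j : C.L) - (((C.τ j)⁻¹ : C.Lˣ) : C.L)) • (((C.uXR (C.αP j))⁻¹ : C.Aˣ) : C.A)

def dlCoeffS (j : Fin (C.n + 1)) : C.A := algebraMap C.L C.A (C.τ j) - C.dlCoeffOne j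

theorem Tch_eq (j : Fin (C.n + 1)) :
    C.Tch j = C.ιA (C.dlCoeffOne j) + C.ιA (C.dlCoeffS j) * ((C.ιW (C.s j) : C.SWˣ) : C.SW) := by
  rw [Tch, Tc, dlCoeffS, dlCoeffOne, ← C.saff_simple j, Algebra.smul_def, ← C.ιA.commutes,
    map_sub]
  simp only [asimple, τ]
  noncomm_ring

theorem dlCoeffS_mul_uXR (j : Fin (C.n + 1)) :
    C.dlCoeffS j * ((C.uXR (C.αP j) : C.Aˣ) : C.A) = C.toA (AddMonoidAlgebra.single 0
      (((C.τ j)⁻¹ : C.Lˣ) : C.L) - AddMonoidAlgebra.single (-C.αP j) (C.τ j : C.L)) := by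
  have hsingle : ∀ (γ : C.P) (c : C.L),
      AddMonoidAlgebra.single γ c = c • AddMonoidAlgebra.of' C.L C.P γ := by
    simp
  rw [dlCoeffS, dlCoeffOne, sub_mul, smul_mul_assoc, Units.inv_mul, C.uXR_spec _ (C.αP_mem j),
    hsingle, hsingle, map_sub, map_smul, map_smul, AddMonoidAlgebra.of'_apply (0 : C.P),
    ← AddMonoidAlgebra.one_def, map_one]
  simp only [Algebra.smul_def, mul_one, map_sub]
  ring

theorem dlCoeffS_mem_nonZeroDivisors (j : Fin (C.n + 1)) : C.dlCoeffS j ∈ C.A⁰ := by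
  refine (mul_mem_nonZeroDivisors (b := ((C.uXR (C.αP j) : C.Aˣ) : C.A))).mp ?_ |>.1
  rw [C.dlCoeffS_mul_uXR j]
  exact C.toA_mem_nonZeroDivisors (AddMonoidAlgebra.single_zero_sub_single_mem_nonZeroDivisors
    (C.τ j)⁻¹.isUnit _ (neg_ne_zero.mpr (C.root_ne _ (C.αP_mem j))))

theorem len_Ω_mul (u : C.Ω) (w : C.W) : C.len ((u : C.W) * w) = C.len w := by
  have len_le : ∀ (u : C.Ω) (w : C.W), C.len ((u : C.W) * w) ≤ C.len w := fun u w => by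
    obtain ⟨u', l, hw, hl⟩ := C.exists_reduced w
    exact hl ▸ C.len_min _ (u * u') l (by rw [hw, Subgroup.coe_mul, mul_assoc])
  refine le_antisymm (len_le u w) ?_
  simpa using len_le u⁻¹ ((u : C.W) * w)

theorem len_s_mul_le (j : Fin (C.n + 1)) (w : C.W) : C.len (C.s j * w) ≤ C.len w + 1 := by
  obtain ⟨u, l, hw, hl⟩ := C.exists_reduced w
  have h := C.len_min (C.s j * w) u (C.σΩ u⁻¹ j :: l) (by
    rw [List.map_cons, List.prod_cons, ← C.Ω_conj u⁻¹ j, hw]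
    simp only [Subgroup.coe_inv, inv_inv]
    group)
  simpa [hl] using h

theorem len_list_prod_le (l : List (Fin (C.n + 1))) : C.len (l.map C.s).prod ≤ l.length :=
  C.len_min _ 1 l (by rw [Subgroup.coe_one, one_mul])

/-- The `𝕃`-linear isomorphism `𝒜 ⊗ 𝕃[W] ≅ 𝒜 # W`. -/
def toSW : (C.W →₀ C.A) →ₗ[C.L] C.SW :=
  Finsupp.lsum C.L fun w => LinearMap.mulRight C.L ((C.ιW w : C.SWˣ) : C.SW) ∘ₗ C.ιA.toLinearMap

theorem toSW_apply (F : C.W →₀ C.A) :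
    C.toSW F = F.sum fun w a => C.ιA a * ((C.ιW w : C.SWˣ) : C.SW) :=
  Finsupp.lsum_apply _ _ _

theorem toSW_injective : Function.Injective C.toSW := C.decomp.injective

theorem toSW_smul (a : C.A) (F : C.W →₀ C.A) : C.toSW (a • F) = C.ιA a * C.toSW F := by
  rw [toSW_apply, toSW_apply, Finsupp.sum_smul_index' (by simp), Finsupp.mul_sum]
  exact Finsupp.sum_congr fun w _ => by rw [smul_eq_mul, map_mul, mul_assoc]

theorem toSW_single_one : C.toSW (Finsupp.single 1 1) = 1 := by
  simp [toSW_apply]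

def translate (w : C.W) (F : C.W →₀ C.A) : C.W →₀ C.A :=
  Finsupp.equivMapDomain (Equiv.mulLeft w) (F.mapRange (C.actA w) (map_zero _))

theorem translate_apply (w : C.W) (F : C.W →₀ C.A) (x : C.W) :
    C.translate w F x = C.actA w (F (w⁻¹ * x)) := rfl

theorem toSW_translate (w : C.W) (F : C.W →₀ C.A) :
    C.toSW (C.translate w F) = ((C.ιW w : C.SWˣ) : C.SW) * C.toSW F := by
  rw [translate, toSW_apply, toSW_apply, Finsupp.sum_equivMapDomain,
    Finsupp.sum_mapRange_index (by simp), Finsupp.mul_sum]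
  refine Finsupp.sum_congr fun x _ => ?_
  rw [Equiv.coe_mulLeft, map_mul, Units.val_mul, ← mul_assoc, ← C.cross, mul_assoc]

def mulTwisted (F : C.W →₀ C.A) (a : C.A) : C.W →₀ C.A :=
  Finsupp.onFinset F.support (fun x => F x * C.actA x a) fun _ hx =>
    Finsupp.mem_support_iff.mpr (left_ne_zero_of_mul hx)

theorem toSW_mulTwisted (F : C.W →₀ C.A) (a : C.A) :
    C.toSW (C.mulTwisted F a) = C.toSW F * C.ιA a := by
  rw [mulTwisted, toSW_apply, toSW_apply, Finsupp.onFinset_sum _ (by simp), Finsupp.sum,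
    Finset.sum_mul]
  refine Finset.sum_congr rfl fun x _ => ?_
  rw [map_mul, mul_assoc, mul_assoc, C.cross]

def HasRegularLeadingTerm (F : C.W →₀ C.A) (w : C.W) : Prop :=
  (∀ x, x ≠ w → F x ≠ 0 → C.len x < C.len w) ∧ F w ∈ C.A⁰

variable {C}

theorem HasRegularLeadingTerm.Tch_mul {F : C.W →₀ C.A} {x : C.W}
    (hF : C.HasRegularLeadingTerm F x) (j : Fin (C.n + 1))
    (hx : C.len (C.s j * x) = C.len x + 1) :
    C.HasRegularLeadingTerm (C.dlCoeffOne j • F + C.dlCoeffS j • C.translate (C.s j) F)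
      (C.s j * x) := by
  have hFsx : F (C.s j * x) = 0 := by
    by_contra h
    have := hF.1 _ (fun h' => by simp [h'] at hx) h
    omega
  refine ⟨fun y hy hFy => ?_, ?_⟩
  · simp only [Finsupp.add_apply, Finsupp.smul_apply, smul_eq_mul, translate_apply] at hFy
    rcases ne_or_eq (F y) 0 with h | h
    · rcases eq_or_ne y x with rfl | hyx
      · omega
      · have := hF.1 y hyx h
        omega
    · rw [h, mul_zero, zero_add] at hFy
      have hy' : (C.s j)⁻¹ * y ≠ x := fun h' => hy (by rw [← h', mul_inv_cancel_left])
      have hlt := hF.1 _ hy' fun h0 => by simp [h0] at hFy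
      have hle := C.len_s_mul_le j ((C.s j)⁻¹ * y)
      rw [mul_inv_cancel_left] at hle
      omega
  · simp only [Finsupp.add_apply, Finsupp.smul_apply, smul_eq_mul, translate_apply, hFsx,
      mul_zero, zero_add, inv_mul_cancel_left]
    exact mul_mem (C.dlCoeffS_mem_nonZeroDivisors j) (C.actA_mem_nonZeroDivisors _ hF.2)

theorem HasRegularLeadingTerm.translate_Ω {F : C.W →₀ C.A} {x : C.W}
    (hF : C.HasRegularLeadingTerm F x) (u : C.Ω) :
    C.HasRegularLeadingTerm (C.translate u F) (u * x) := by
  refine ⟨fun y hy hFy => ?_, ?_⟩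
  · have hy' : (u : C.W)⁻¹ * y ≠ x := fun h' => hy (by rw [← h', mul_inv_cancel_left])
    have hlt := hF.1 _ hy' fun h0 => by simp [translate_apply, h0] at hFy
    have hlen := C.len_Ω_mul u⁻¹ y
    rw [Subgroup.coe_inv] at hlen
    rw [C.len_Ω_mul]
    omega
  · rw [translate_apply, inv_mul_cancel_left]
    exact C.actA_mem_nonZeroDivisors _ hF.2

variable (C)

theorem exists_toSW_eq_list_prod_Tch (l : List (Fin (C.n + 1)))
    (hl : C.len (l.map C.s).prod = l.length) :
    ∃ F, C.toSW F = (l.map C.Tch).prod ∧ C.HasRegularLeadingTerm F (l.map C.s).prod := by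
  induction l with
  | nil =>
    refine ⟨Finsupp.single 1 1, C.toSW_single_one, fun x hx h => ?_, ?_⟩
    · exact absurd (Finsupp.single_eq_of_ne' (Ne.symm hx)) h
    · simp [one_mem]
  | cons j l ih =>
    have hlen := C.len_s_mul_le j (l.map C.s).prod
    have hle := C.len_list_prod_le l
    simp only [List.map_cons, List.prod_cons, List.length_cons] at hl ⊢
    obtain ⟨F, hF, hlead⟩ := ih (by omega)
    refine ⟨_, ?_, hlead.Tch_mul j (by omega)⟩
    rw [map_add, toSW_smul, toSW_smul, toSW_translate, hF, Tch_eq]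
    noncomm_ring

theorem exists_toSW_eq_TwS (w : C.W) :
    ∃ F, C.toSW F = C.TwS w ∧ C.HasRegularLeadingTerm F w := by
  obtain ⟨hw, hl⟩ := C.red_spec w
  have hlen := C.len_Ω_mul (C.redΩ w) ((C.redList w).map C.s).prod
  rw [← hw] at hlen
  obtain ⟨F, hF, hlead⟩ := C.exists_toSW_eq_list_prod_Tch (C.redList w) (by omega)
  refine ⟨C.translate (C.redΩ w) F, by rw [toSW_translate, hF, TwS], ?_⟩
  have := hlead.translate_Ω (C.redΩ w)
  rwa [← hw] at this

theorem linearIndependent_toSW_of_triangular {H : C.P × C.W → C.W →₀ C.A}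
    (hsupp : ∀ p x, x ≠ p.2 → H p x ≠ 0 → C.len x < C.len p.2)
    (hlead : ∀ w, ∃ h ∈ C.A⁰, ∃ e : C.P → C.P, e.Injective ∧
      ∀ μ, H (μ, w) w = h * C.toA (C.Xl (e μ))) :
    LinearIndependent C.L fun p => C.toSW (H p) := by
  refine (linearIndependent_of_triangular C.len H hsupp fun w => ?_).map' C.toSW
    (LinearMap.ker_eq_bot.mpr C.toSW_injective)
  obtain ⟨h, hh, e, he, hH⟩ := hlead w
  simpa only [hH] using C.linearIndependent_mul_toA_Xl hh he

end DAHACtx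

/-- The elements `X^μ Ť_w` (`μ ∈ P`, `w ∈ W`) are linearly independent over `𝕃` in
`𝒜 # W`;  likewise the elements `Ť_w X^μ` (`μ ∈ P`, `w ∈ W`) are linearly independent
over `𝕃`. -/
theorem DL_linearIndependent (C : DAHACtx) :
    LinearIndependent C.L (fun p : C.P × C.W => C.XS p.1 * C.TwS p.2) ∧
    LinearIndependent C.L (fun p : C.P × C.W => C.TwS p.2 * C.XS p.1) := by
  choose F hF hlead using C.exists_toSW_eq_TwS
  constructor
  · have key := C.linearIndependent_toSW_of_triangular
      (H := fun p => C.toA (C.Xl p.1) • F p.2)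
      (fun p x hx h0 => (hlead p.2).1 x hx (right_ne_zero_of_mul h0))
      fun w => ⟨F w w, (hlead w).2, id, Function.injective_id, fun μ => mul_comm _ _⟩
    simpa only [DAHACtx.toSW_smul, hF, DAHACtx.XS] using key
  · have key := C.linearIndependent_toSW_of_triangular
      (H := fun p => C.mulTwisted (F p.2) (C.toA (C.Xl p.1)))
      (fun p x hx h0 => (hlead p.2).1 x hx (left_ne_zero_of_mul h0))
      fun w => ⟨F w w, (hlead w).2, C.grAct w, (Multiplicative.toAdd (C.grAct w)).injective,
        fun μ => congrArg (F w w * ·) (C.actA_X w μ)⟩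
    simpa only [DAHACtx.toSW_mulTwisted, hF, DAHACtx.XS] using key
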